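/- arXiv:2604.05911 — 4 statements merged into one kernel-verified Lean document; each statement's English description precedes it below -/
import Mathlib

section
/- For any integer n, the set B = {n, n+1} is saturating: defining B_0 = B and B_k = B_{k-1} ∪ {2k' - l : k' ∈ B_0, l ∈ B_{k-1}}, the union of all B_k equals ℤ. In fact, B_k contains all integers in the interval [n-k, n+k+1]. -/
/-- Iterated saturation extension: `satIter B0 0 = B0`,
`satIter B0 (k+1) = satIter B0 k ∪ {2m - l : m ∈ B0, l ∈ satIter B0 k}`. -/
def satIter (B0 : Set ℤ) : ℕ → Set ℤ
  | 0 => B0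
  | k + 1 => satIter B0 k ∪ {x | ∃ m ∈ B0, ∃ l ∈ satIter B0 k, x = 2 * m - l}

/-!
Reflecting the interval `[n - k, n + k + 1]` in `n` adds `n - k - 1` and reflecting it in `n + 1`
adds `n + k + 2`, so each step of the iteration grows the interval by one point at each end.
-/

theorem satIter_subset_succ (B0 : Set ℤ) (k : ℕ) : satIter B0 k ⊆ satIter B0 (k + 1) :=
  Set.subset_union_left

theorem two_mul_sub_mem_satIter_succ {B0 : Set ℤ} {k : ℕ} {m l : ℤ} (hm : m ∈ B0)
    (hl : l ∈ satIter B0 k) : 2 * m - l ∈ satIter B0 (k + 1) :=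
  Or.inr ⟨m, hm, l, hl, rfl⟩

theorem Icc_subset_satIter_pair (n : ℤ) (k : ℕ) :
    Set.Icc (n - k) (n + k + 1) ⊆ satIter {n, n + 1} k := by
  induction k with
  | zero =>
    intro x ⟨hlo, hhi⟩
    simp only [satIter, Set.mem_insert_iff, Set.mem_singleton_iff]
    push_cast at hlo hhi
    omega
  | succ k ih =>
    intro x ⟨hlo, hhi⟩
    push_cast at hlo hhi
    have hmem (y : ℤ) (h₁ : n - k ≤ y) (h₂ : y ≤ n + k + 1) : y ∈ satIter {n, n + 1} k :=
      ih ⟨h₁, h₂⟩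
    rcases lt_or_ge x (n - k) with hbelow | hxlo
    · have hx : x = 2 * n - (n + k + 1) := by omega
      exact hx ▸ two_mul_sub_mem_satIter_succ (Set.mem_insert n _) (hmem _ (by omega) le_rfl)
    rcases le_or_gt x (n + k + 1) with hxhi | habove
    · exact satIter_subset_succ _ _ (hmem x hxlo hxhi)
    · have hx : x = 2 * (n + 1) - (n - k) := by omega
      exact hx ▸ two_mul_sub_mem_satIter_succ (Set.mem_insert_of_mem n rfl)
        (hmem _ le_rfl (by omega))

theorem iUnion_satIter_pair (n : ℤ) : ⋃ k : ℕ, satIter {n, n + 1} k = Set.univ :=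
  Set.eq_univ_of_forall fun x =>
    Set.mem_iUnion.2 ⟨(x - n).natAbs, Icc_subset_satIter_pair n _ ⟨by omega, by omega⟩⟩

/-- For any integer `n`, the set `{n, n+1}` is saturating, and in fact the `k`-th
iterate contains all integers in `[n-k, n+k+1]`. -/
theorem stmt0 (n : ℤ) :
    (⋃ k : ℕ, satIter {n, n + 1} k) = Set.univ ∧
    ∀ k : ℕ, ∀ x : ℤ, n - (k : ℤ) ≤ x → x ≤ n + (k : ℤ) + 1 →
      x ∈ satIter {n, n + 1} k :=
  ⟨iUnion_satIter_pair n, fun k _ h₁ h₂ => Icc_subset_satIter_pair n k ⟨h₁, h₂⟩⟩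
end

section
/- Let E, X be Hilbert spaces and A : E → X a bounded linear operator with dense range. Then for every x ∈ X, the pseudo-inverse regularization satisfies lim_{γ → 0+} ‖A R^γ x − x‖ = 0, where R^γ = A*(AA* + γ·Id)^{-1}. -/
open Filter

set_option maxHeartbeats 1600000

section Aux

open ContinuousLinearMap in
private lemma aux_inner {E X : Type*}
    [NormedAddCommGroup E] [InnerProductSpace ℝ E] [CompleteSpace E]
    [NormedAddCommGroup X] [InnerProductSpace ℝ X] [CompleteSpace X]
    (A : E →L[ℝ] X) (γ : ℝ) (y : X) :
    (inner ℝ ((A.comp (adjoint A) + γ • ContinuousLinearMap.id ℝ X) y) y : ℝ)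
      = ‖(adjoint A) y‖ ^ 2 + γ * ‖y‖ ^ 2 := by
  have h1 : (inner ℝ (A ((adjoint A) y)) y : ℝ) = ‖(adjoint A) y‖ ^ 2 := by
    rw [real_inner_comm, ← adjoint_inner_left, real_inner_self_eq_norm_sq]
  simp [inner_add_left, real_inner_smul_left, real_inner_self_eq_norm_sq, h1]

end Aux

/-- If `A : E → X` has dense range, then for every `x`, `‖A R^γ x - x‖ → 0` as `γ → 0+`,
where `R^γ = A*(AA* + γ·Id)⁻¹` is the pseudo-inverse regularization (characterized here by
`R^γ ∘ (AA* + γ·Id) = A*`). -/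
theorem stmt4 {E X : Type*}
    [NormedAddCommGroup E] [InnerProductSpace ℝ E] [CompleteSpace E]
    [NormedAddCommGroup X] [InnerProductSpace ℝ X] [CompleteSpace X]
    (A : E →L[ℝ] X) (hA : DenseRange A)
    (R : ℝ → (X →L[ℝ] E))
    (hR : ∀ γ : ℝ, 0 < γ → ∀ x : X,
      R γ ((A.comp (ContinuousLinearMap.adjoint A) + γ • ContinuousLinearMap.id ℝ X) x)
        = (ContinuousLinearMap.adjoint A) x) :
    ∀ x : X,
      Tendsto (fun γ : ℝ => ‖A (R γ x) - x‖) (nhdsWithin 0 (Set.Ioi 0)) (nhds 0) := by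
  set A' := ContinuousLinearMap.adjoint A with hA'
  set B : ℝ → (X →L[ℝ] X) :=
    fun γ => A.comp A' + γ • ContinuousLinearMap.id ℝ X with hB
  -- coercivity bound: γ‖y‖ ≤ ‖B γ y‖
  have hcoer : ∀ γ : ℝ, 0 < γ → ∀ y : X, γ * ‖y‖ ≤ ‖B γ y‖ := by
    intro γ hγ y
    rcases eq_or_ne y 0 with rfl | hy
    · simp
    have h1 : γ * ‖y‖ ^ 2 ≤ (inner ℝ (B γ y) y : ℝ) := by
      rw [aux_inner A γ y]
      nlinarith [sq_nonneg ‖A' y‖]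
    have h2 : (inner ℝ (B γ y) y : ℝ) ≤ ‖B γ y‖ * ‖y‖ := real_inner_le_norm _ _
    have hy' : 0 < ‖y‖ := norm_pos_iff.mpr hy
    nlinarith
  -- surjectivity of B γ
  have hsurj : ∀ γ : ℝ, 0 < γ → Function.Surjective (B γ) := by
    intro γ hγ
    have hanti : AntilipschitzWith (Real.toNNReal γ)⁻¹ (B γ) := by
      refine ContinuousLinearMap.antilipschitz_of_bound _ ?_
      intro y
      rw [NNReal.coe_inv, Real.coe_toNNReal _ hγ.le, ← div_eq_inv_mul, le_div_iff₀ hγ, mul_comm]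
      exact hcoer γ hγ y
    have hclosed : IsClosed (Set.range (B γ)) :=
      hanti.isClosed_range (B γ).uniformContinuous
    have hK : (LinearMap.range (B γ : X →ₗ[ℝ] X)).topologicalClosure = ⊤ := by
      rw [Submodule.topologicalClosure_eq_top_iff]
      rw [Submodule.eq_bot_iff]
      intro v hv
      have h0 : (inner ℝ (B γ v) v : ℝ) = 0 := by
        exact hv (B γ v) ⟨v, rfl⟩
      have h1 : γ * ‖v‖ ^ 2 ≤ (0 : ℝ) := by
        rw [← h0, aux_inner A γ v]
        nlinarith [sq_nonneg ‖A' v‖]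
      have h2 : ‖v‖ ^ 2 = 0 := le_antisymm (by nlinarith) (sq_nonneg _)
      have h3 : ‖v‖ = 0 := by
        have := pow_eq_zero_iff (n := 2) (by norm_num) |>.mp h2
        exact this
      simpa using h3
    have : (LinearMap.range (B γ : X →ₗ[ℝ] X) : Set X) = Set.univ := by
      have hcl : (LinearMap.range (B γ : X →ₗ[ℝ] X)).topologicalClosure = LinearMap.range (B γ : X →ₗ[ℝ] X) := by
        apply IsClosed.submodule_topologicalClosure_eq
        exact hclosed
      rw [hcl] at hK
      simp [hK]
    intro x
    have : x ∈ (LinearMap.range (B γ : X →ₗ[ℝ] X) : Set X) := this ▸ Set.mem_univ x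
    exact this
  -- key bound: if B γ y = A u then γ‖y‖ ≤ √γ ‖u‖
  have hkey : ∀ γ : ℝ, 0 < γ → ∀ u : E, ∀ y : X, B γ y = A u →
      γ * ‖y‖ ≤ Real.sqrt γ * ‖u‖ := by
    intro γ hγ u y hy
    have hin : (inner ℝ (B γ y) y : ℝ) = ‖A' y‖ ^ 2 + γ * ‖y‖ ^ 2 := aux_inner A γ y
    have hin2 : (inner ℝ (B γ y) y : ℝ) = inner ℝ u (A' y) := by
      rw [hy, hA', ContinuousLinearMap.adjoint_inner_right, real_inner_comm]
    have hEq : ‖A' y‖ ^ 2 + γ * ‖y‖ ^ 2 = (inner ℝ u (A' y) : ℝ) := by rw [← hin, hin2]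
    have hle : ‖A' y‖ ^ 2 + γ * ‖y‖ ^ 2 ≤ ‖u‖ * ‖A' y‖ :=
      hEq ▸ real_inner_le_norm u (A' y)
    have hγy : 0 ≤ γ * ‖y‖ ^ 2 := mul_nonneg hγ.le (sq_nonneg _)
    have hAy : ‖A' y‖ ≤ ‖u‖ := by
      rcases eq_or_ne (‖A' y‖) 0 with h0 | h0
      · rw [h0]; exact norm_nonneg u
      have hpos : 0 < ‖A' y‖ := lt_of_le_of_ne (norm_nonneg _) (Ne.symm h0)
      nlinarith
    have hyb : γ * ‖y‖ ^ 2 ≤ ‖u‖ ^ 2 := by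
      nlinarith [sq_nonneg ‖A' y‖, norm_nonneg u, norm_nonneg (A' y)]
    -- γ²‖y‖² ≤ γ‖u‖² = (√γ ‖u‖)²
    have hsq : (γ * ‖y‖) ^ 2 ≤ (Real.sqrt γ * ‖u‖) ^ 2 := by
      rw [mul_pow, mul_pow, Real.sq_sqrt hγ.le]
      nlinarith
    have h1 : 0 ≤ γ * ‖y‖ := mul_nonneg hγ.le (norm_nonneg y)
    have h2 : 0 ≤ Real.sqrt γ * ‖u‖ := mul_nonneg (Real.sqrt_nonneg γ) (norm_nonneg u)
    nlinarith
  intro x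
  rw [Metric.tendsto_nhdsWithin_nhds]
  intro ε hε
  -- pick u with dist x (A u) < ε/2
  obtain ⟨u, hu⟩ := Metric.denseRange_iff.mp hA x (ε / 2) (by linarith)
  have hu' : ‖x - A u‖ < ε / 2 := by rwa [dist_eq_norm] at hu
  refine ⟨min 1 ((ε / (2 * (‖u‖ + 1))) ^ 2), by positivity, ?_⟩
  intro γ hγ hγd
  have hγ0 : 0 < γ := hγ
  rw [Real.dist_eq, sub_zero, abs_of_pos hγ0] at hγd
  have hγδ : γ < (ε / (2 * (‖u‖ + 1))) ^ 2 := lt_of_lt_of_le hγd (min_le_right _ _)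
  obtain ⟨y, hy⟩ := hsurj γ hγ0 x
  have hRx : R γ x = A' y := by rw [← hy]; exact hR γ hγ0 y
  have hAR : A (R γ x) - x = -(γ • y) := by
    rw [hRx, ← hy]
    simp [hB, ContinuousLinearMap.add_apply, ContinuousLinearMap.smul_apply]
  have hnorm : ‖A (R γ x) - x‖ = γ * ‖y‖ := by
    rw [hAR, norm_neg, norm_smul, Real.norm_eq_abs, abs_of_pos hγ0]
  obtain ⟨y₁, hy₁⟩ := hsurj γ hγ0 (x - A u)
  have hy₂ : B γ (y - y₁) = A u := by
    rw [map_sub, hy, hy₁]; abel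
  have hb1 : γ * ‖y₁‖ < ε / 2 := by
    have h := hcoer γ hγ0 y₁
    rw [hy₁] at h
    exact lt_of_le_of_lt h hu'
  have hb2 : γ * ‖y - y₁‖ ≤ Real.sqrt γ * ‖u‖ := hkey γ hγ0 u _ hy₂
  have hsqrt : Real.sqrt γ < ε / (2 * (‖u‖ + 1)) := by
    have h := Real.sqrt_lt_sqrt hγ0.le hγδ
    rwa [Real.sqrt_sq (by positivity)] at h
  have hb2' : Real.sqrt γ * ‖u‖ < ε / 2 := by
    have h1 : Real.sqrt γ * ‖u‖ ≤ Real.sqrt γ * (‖u‖ + 1) := by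
      nlinarith [Real.sqrt_nonneg γ]
    have h2 : Real.sqrt γ * (‖u‖ + 1) < (ε / (2 * (‖u‖ + 1))) * (‖u‖ + 1) := by
      have : (0:ℝ) < ‖u‖ + 1 := by positivity
      exact mul_lt_mul_of_pos_right hsqrt this
    have h3 : (ε / (2 * (‖u‖ + 1))) * (‖u‖ + 1) = ε / 2 := by
      field_simp
    linarith
  have hyy : γ * ‖y‖ ≤ γ * ‖y₁‖ + γ * ‖y - y₁‖ := by
    have h : ‖y‖ ≤ ‖y₁‖ + ‖y - y₁‖ := by
      simpa using norm_add_le y₁ (y - y₁)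
    nlinarith
  rw [Real.dist_eq, sub_zero, abs_of_nonneg (norm_nonneg _), hnorm]
  linarith
end

section
/- Suppose real-valued functions f_k on [0,1] (k in a finite index set B) have dense and pairwise disjoint sets of discontinuity points P_k. If continuous functions a_k : [0,1] → ℝ and a continuous c : [0,1] → ℝ satisfy Σ_k a_k(t) f_k(t) = c(t) for all t ∈ [0,1], then a_k ≡ 0 for each k and c ≡ 0. -/
open Set

/-!
At a discontinuity point `p` of `f k`, every other `f i` is continuous (the sets `P_i` are
disjoint), so the identity `∑ a_i f_i = c` forces `a_k f_k` to be continuous at `p`; dividing by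
`a_k` would make `f_k` continuous there, so `a_k p = 0`. Thus `a_k` vanishes on the dense set
`P_k`, hence everywhere by continuity, and then `c = ∑ a_k f_k = 0`.
-/

theorem ContinuousWithinAt.of_mul_left {α G₀ : Type*} [TopologicalSpace α] [GroupWithZero G₀]
    [TopologicalSpace G₀] [ContinuousInv₀ G₀] [ContinuousMul G₀] [T1Space G₀]
    {f g : α → G₀} {s : Set α} {p : α}
    (hgf : ContinuousWithinAt (fun t => g t * f t) s p) (hg : ContinuousWithinAt g s p)
    (hp : g p ≠ 0) : ContinuousWithinAt f s p := by
  have hquot : ContinuousWithinAt (fun t => (g t)⁻¹ * (g t * f t)) s p :=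
    (hg.inv₀ hp).mul hgf
  refine hquot.congr_of_eventuallyEq ?_ (inv_mul_cancel_left₀ hp _).symm
  filter_upwards [hg.eventually_ne hp] with t ht
  exact (inv_mul_cancel_left₀ ht _).symm

theorem ContinuousWithinAt.of_sum_of_ne {ι α M : Type*} [TopologicalSpace α] [AddCommGroup M]
    [TopologicalSpace M] [IsTopologicalAddGroup M] [Fintype ι] [DecidableEq ι]
    {g : ι → α → M} {s : Set α} {p : α} {k : ι}
    (hsum : ContinuousWithinAt (fun t => ∑ i, g i t) s p)
    (hg : ∀ i ≠ k, ContinuousWithinAt (g i) s p) : ContinuousWithinAt (g k) s p := by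
  have hsplit : g k = fun t => (∑ i, g i t) - ∑ i ∈ Finset.univ.erase k, g i t := by
    funext t
    rw [← Finset.add_sum_erase _ _ (Finset.mem_univ k), add_sub_cancel_right]
  rw [hsplit]
  exact hsum.sub (tendsto_finsetSum _ fun i hi => hg i (Finset.ne_of_mem_erase hi))

theorem coeff_eq_zero_of_not_continuousWithinAt {ι α K : Type*} [TopologicalSpace α] [Field K]
    [TopologicalSpace K] [IsTopologicalDivisionRing K] [T1Space K] [Fintype ι]
    {f a : ι → α → K} {c : α → K} {s : Set α} {p : α} {k : ι} (hp : p ∈ s)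
    (ha : ∀ i, ContinuousWithinAt (a i) s p) (hc : ContinuousWithinAt c s p)
    (heq : ∀ t ∈ s, ∑ i, a i t * f i t = c t)
    (hf : ∀ i ≠ k, ContinuousWithinAt (f i) s p) (hfk : ¬ ContinuousWithinAt (f k) s p) :
    a k p = 0 := by
  classical
  by_contra hak
  have hsum : ContinuousWithinAt (fun t => ∑ i, a i t * f i t) s p :=
    hc.congr heq (heq p hp)
  have hterm : ContinuousWithinAt (fun t => a k t * f k t) s p :=
    hsum.of_sum_of_ne (g := fun i t => a i t * f i t) fun i hi => (ha i).mul (hf i hi)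
  exact hfk (hterm.of_mul_left (ha k) hak)

theorem stmt5_general {ι : Type*} [Fintype ι]
    (f : ι → ℝ → ℝ) (a : ι → ℝ → ℝ) (c : ℝ → ℝ)
    (hdense : ∀ k, Set.Icc (0 : ℝ) 1 ⊆
      closure {t | t ∈ Set.Icc (0 : ℝ) 1 ∧ ¬ ContinuousWithinAt (f k) (Set.Icc 0 1) t})
    (hdisj : ∀ k k', k ≠ k' →
      Disjoint {t | t ∈ Set.Icc (0 : ℝ) 1 ∧ ¬ ContinuousWithinAt (f k) (Set.Icc 0 1) t}
        {t | t ∈ Set.Icc (0 : ℝ) 1 ∧ ¬ ContinuousWithinAt (f k') (Set.Icc 0 1) t})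
    (ha : ∀ k, ContinuousOn (a k) (Set.Icc 0 1))
    (hc : ContinuousOn c (Set.Icc 0 1))
    (heq : ∀ t ∈ Set.Icc (0 : ℝ) 1, ∑ k, a k t * f k t = c t) :
    (∀ k, ∀ t ∈ Set.Icc (0 : ℝ) 1, a k t = 0) ∧ (∀ t ∈ Set.Icc (0 : ℝ) 1, c t = 0) := by
  have ha_zero : ∀ k, EqOn (a k) 0 (Icc 0 1) := by
    intro k
    refine EqOn.of_subset_closure (fun p hp => ?_) (ha k) continuousOn_const
      (fun _ hp => hp.1) (hdense k)
    refine coeff_eq_zero_of_not_continuousWithinAt hp.1 (fun i => ha i p hp.1) (hc p hp.1) heq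
      (fun i hik => ?_) hp.2
    by_contra hfi
    exact disjoint_left.mp (hdisj k i hik.symm) hp ⟨hp.1, hfi⟩
  refine ⟨ha_zero, fun t ht => ?_⟩
  rw [← heq t ht]
  exact Finset.sum_eq_zero fun k _ => by rw [ha_zero k ht, Pi.zero_apply, zero_mul]

/-- If the `f k` are bounded on `[0,1]` with dense, pairwise disjoint sets of
discontinuity points, and continuous functions `a k`, `c` satisfy
`∑ k, a k t * f k t = c t` on `[0,1]`, then all `a k` and `c` vanish on `[0,1]`. -/
theorem stmt5 {ι : Type*} [Fintype ι]
    (f : ι → ℝ → ℝ) (a : ι → ℝ → ℝ) (c : ℝ → ℝ)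
    (hbdd : ∀ k, ∃ M : ℝ, ∀ t ∈ Set.Icc (0 : ℝ) 1, |f k t| ≤ M)
    (hdense : ∀ k, Set.Icc (0 : ℝ) 1 ⊆
      closure {t | t ∈ Set.Icc (0 : ℝ) 1 ∧ ¬ ContinuousWithinAt (f k) (Set.Icc 0 1) t})
    (hdisj : ∀ k k', k ≠ k' →
      Disjoint {t | t ∈ Set.Icc (0 : ℝ) 1 ∧ ¬ ContinuousWithinAt (f k) (Set.Icc 0 1) t}
        {t | t ∈ Set.Icc (0 : ℝ) 1 ∧ ¬ ContinuousWithinAt (f k') (Set.Icc 0 1) t})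
    (ha : ∀ k, ContinuousOn (a k) (Set.Icc 0 1))
    (hc : ContinuousOn c (Set.Icc 0 1))
    (heq : ∀ t ∈ Set.Icc (0 : ℝ) 1, ∑ k, a k t * f k t = c t) :
    (∀ k, ∀ t ∈ Set.Icc (0 : ℝ) 1, a k t = 0) ∧ (∀ t ∈ Set.Icc (0 : ℝ) 1, c t = 0) :=
  stmt5_general f a c hdense hdisj ha hc heq
end

section
/- Let S : X × E → X between Hilbert spaces be twice Fréchet differentiable with locally bounded second derivatives. Fix y ∈ X and ζ ∈ E, set A = D_ζS(y,ζ), and suppose: (i) there is T ∈ L(X,V) with V ↪ X and ‖T‖_{L(X,V)} ≤ C₀, (ii) ‖D_yS(y,ζ) − T‖_{L(X)} ≤ q₀ < 1, (iii) R : X → E is a bounded operator such that ‖ARv − v‖_X ≤ ε‖v‖_V for all v ∈ V. Define ξ = ζ − R T (x−y). Then ‖S(y,ζ) − S(x,ξ)‖ ≤ (q₀ + C₀ε + C_δ δ)‖y−x‖ whenever ‖y−x‖ ≤ δ, where C_δ depends on the local bounds of D²S and ‖R‖, ‖T‖. In particular, if q₀ + C₀ε < q₁ < 1, then for δ small enough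 ‖S(y,ζ) − S(x,ξ)‖ ≤ q₁‖y−x‖. -/
lemma my_norm_itf_one_sub {𝕜 : Type*} [NontriviallyNormedField 𝕜]
    {A B : Type*} [NormedAddCommGroup A] [NormedSpace 𝕜 A]
    [NormedAddCommGroup B] [NormedSpace 𝕜 B]
    (f : A → B) (x x' : A) :
    ‖iteratedFDeriv 𝕜 1 f x - iteratedFDeriv 𝕜 1 f x'‖
      = ‖fderiv 𝕜 f x - fderiv 𝕜 f x'‖ := by
  have key : ∀ z : A, (continuousMultilinearCurryFin1 𝕜 A B) (iteratedFDeriv 𝕜 1 f z)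
      = fderiv 𝕜 f z := by
    intro z
    ext v
    simp [continuousMultilinearCurryFin1_apply, iteratedFDeriv_one_apply, Fin.snoc]
  rw [← (continuousMultilinearCurryFin1 𝕜 A B).norm_map
    (iteratedFDeriv 𝕜 1 f x - iteratedFDeriv 𝕜 1 f x'), map_sub, key, key]

/-- Local stabilization via an approximate inverse and a compact approximation of the
linearization: with `A = D_ζ S(y,ζ)`, `T` a `V`-valued approximation of `D_y S(y,ζ)`
(`‖T‖_{L(X,V)} ≤ C₀`, `‖D_y S(y,ζ) − ιT‖_{L(X)} ≤ q₀`) and `R` an `ε`-approximate right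
inverse of `A` on `V`, the control `ξ = ζ − R T (x−y)` satisfies
`‖S(y,ζ) − S(x,ξ)‖ ≤ (q₀ + C₀ ε + C₁ δ)‖y−x‖` for `‖y−x‖ ≤ δ` small; in particular for
any `q₁ ∈ (q₀ + C₀ε, 1)` and `δ` small enough, `‖S(y,ζ) − S(x,ξ)‖ ≤ q₁‖y−x‖`. -/
theorem stmt10 {X E V : Type*}
    [NormedAddCommGroup X] [InnerProductSpace ℝ X] [CompleteSpace X]
    [NormedAddCommGroup E] [InnerProductSpace ℝ E] [CompleteSpace E]
    [NormedAddCommGroup V] [InnerProductSpace ℝ V] [CompleteSpace V]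
    (ι : V →L[ℝ] X) (hι : Function.Injective ι)
    (S : X → E → X) (hS : ContDiff ℝ 2 fun q : X × E => S q.1 q.2)
    (y : X) (ζ : E) (M : ℝ)
    (hM : ∀ q ∈ Metric.closedBall (y, ζ) 1,
      ‖iteratedFDeriv ℝ 2 (fun q : X × E => S q.1 q.2) q‖ ≤ M)
    (T : X →L[ℝ] V) (C₀ : ℝ) (hC₀ : 0 < C₀) (hT : ‖T‖ ≤ C₀)
    (q₀ : ℝ) (hq₀ : q₀ ∈ Set.Ioo (0 : ℝ) 1)
    (hDy : ‖fderiv ℝ (fun x => S x ζ) y - ι.comp T‖ ≤ q₀)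
    (R : X →L[ℝ] E) (ε : ℝ) (hε : 0 < ε)
    (hAR : ∀ w : V, ‖fderiv ℝ (fun η => S y η) ζ (R (ι w)) - ι w‖ ≤ ε * ‖w‖) :
    (∃ C₁ : ℝ, 0 ≤ C₁ ∧ ∃ δ₀ : ℝ, 0 < δ₀ ∧ ∀ δ ∈ Set.Ioc (0 : ℝ) δ₀, ∀ x : X,
      ‖y - x‖ ≤ δ →
      ‖S y ζ - S x (ζ - R (ι (T (x - y))))‖ ≤ (q₀ + C₀ * ε + C₁ * δ) * ‖y - x‖) ∧
    (∀ q₁ : ℝ, q₀ + C₀ * ε < q₁ → q₁ < 1 → ∃ δ : ℝ, 0 < δ ∧ ∀ x : X, ‖y - x‖ ≤ δ →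
      ‖S y ζ - S x (ζ - R (ι (T (x - y))))‖ ≤ q₁ * ‖y - x‖) := by
  classical
  set F : X × E → X := fun q : X × E => S q.1 q.2 with hF
  have hFd : Differentiable ℝ F := hS.differentiable (by norm_num)
  have hφ : ContDiff ℝ 1 (iteratedFDeriv ℝ 1 F) :=
    hS.iteratedFDeriv_right (by norm_num)
  have hM0 : 0 ≤ M := le_trans (norm_nonneg _) (hM (y, ζ) (by simp))
  set D : X × E →L[ℝ] X := fderiv ℝ F (y, ζ) with hD
  set K : ℝ := 1 + ‖R.comp (ι.comp T)‖ with hK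
  have hK1 : (1 : ℝ) ≤ K := le_add_of_nonneg_right (norm_nonneg _)
  have hKpos : (0 : ℝ) < K := lt_of_lt_of_le one_pos hK1
  set C₁ : ℝ := M * K ^ 2 with hC₁
  have hC₁0 : 0 ≤ C₁ := by positivity
  set δ₀ : ℝ := 1 / K with hδ₀
  have hδ₀pos : 0 < δ₀ := by positivity
  -- partial derivatives
  have hinl : HasFDerivAt (fun x : X => ((x, ζ) : X × E))
      ((ContinuousLinearMap.id ℝ X).prod 0) y :=
    HasFDerivAt.prodMk (hasFDerivAt_id y) (hasFDerivAt_const ζ y)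
  have hinr : HasFDerivAt (fun η : E => ((y, η) : X × E))
      ((0 : E →L[ℝ] X).prod (ContinuousLinearMap.id ℝ E)) ζ :=
    HasFDerivAt.prodMk (hasFDerivAt_const y ζ) (hasFDerivAt_id ζ)
  have hDy1 : fderiv ℝ (fun x => S x ζ) y
      = D.comp ((ContinuousLinearMap.id ℝ X).prod 0) := by
    have h1 : HasFDerivAt F D (y, ζ) := (hFd (y, ζ)).hasFDerivAt
    exact (h1.comp y hinl).fderiv
  have hDζ1 : fderiv ℝ (fun η => S y η) ζ
      = D.comp ((0 : E →L[ℝ] X).prod (ContinuousLinearMap.id ℝ E)) := by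
    have h1 : HasFDerivAt F D (y, ζ) := (hFd (y, ζ)).hasFDerivAt
    exact (h1.comp ζ hinr).fderiv
  -- the linear part estimate
  have hlin : ∀ u : X, ‖D (-u, R (ι (T u)))‖ ≤ (q₀ + C₀ * ε) * ‖u‖ := by
    intro u
    have hsplit : D (-u, R (ι (T u)))
        = -(fderiv ℝ (fun x => S x ζ) y u)
          + fderiv ℝ (fun η => S y η) ζ (R (ι (T u))) := by
      rw [hDy1, hDζ1]
      have : ((-u, R (ι (T u))) : X × E) = -(u, (0 : E)) + ((0 : X), R (ι (T u))) := by
        simp [Prod.ext_iff]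
      rw [this, map_add, map_neg]
      simp
    rw [hsplit]
    have hrw : -(fderiv ℝ (fun x => S x ζ) y u)
          + fderiv ℝ (fun η => S y η) ζ (R (ι (T u)))
        = -((fderiv ℝ (fun x => S x ζ) y - ι.comp T) u)
          - (ι (T u) - fderiv ℝ (fun η => S y η) ζ (R (ι (T u)))) := by
      simp only [ContinuousLinearMap.sub_apply, ContinuousLinearMap.comp_apply]
      abel
    rw [hrw]
    have h1 : ‖(fderiv ℝ (fun x => S x ζ) y - ι.comp T) u‖ ≤ q₀ * ‖u‖ :=
      le_trans ((fderiv ℝ (fun x => S x ζ) y - ι.comp T).le_opNorm u)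
        (mul_le_mul_of_nonneg_right hDy (norm_nonneg u))
    have h2 : ‖ι (T u) - fderiv ℝ (fun η => S y η) ζ (R (ι (T u)))‖ ≤ ε * (C₀ * ‖u‖) := by
      rw [norm_sub_rev]
      refine le_trans (hAR (T u)) (mul_le_mul_of_nonneg_left ?_ hε.le)
      exact le_trans (T.le_opNorm u) (mul_le_mul_of_nonneg_right hT (norm_nonneg u))
    calc ‖-((fderiv ℝ (fun x => S x ζ) y - ι.comp T) u)
          - (ι (T u) - fderiv ℝ (fun η => S y η) ζ (R (ι (T u))))‖
        ≤ ‖(fderiv ℝ (fun x => S x ζ) y - ι.comp T) u‖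
          + ‖ι (T u) - fderiv ℝ (fun η => S y η) ζ (R (ι (T u)))‖ := by
          rw [sub_eq_add_neg]
          refine le_trans (norm_add_le _ _) ?_
          rw [norm_neg, norm_neg]
      _ ≤ q₀ * ‖u‖ + ε * (C₀ * ‖u‖) := add_le_add h1 h2
      _ = (q₀ + C₀ * ε) * ‖u‖ := by ring
  -- Lipschitz bound for the derivative on the unit ball
  have lip : ∀ p' ∈ Metric.closedBall ((y, ζ) : X × E) 1,
      ‖fderiv ℝ F p' - D‖ ≤ M * ‖p' - (y, ζ)‖ := by
    intro p' hp'
    rw [hD, ← my_norm_itf_one_sub F p' (y, ζ)]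
    refine (convex_closedBall ((y, ζ) : X × E) 1).norm_image_sub_le_of_norm_fderiv_le
      (fun q _ => (hφ.differentiable one_ne_zero).differentiableAt) (fun q hq => ?_)
      (Metric.mem_closedBall_self one_pos.le) hp'
    rw [norm_fderiv_iteratedFDeriv]
    exact hM q hq
  -- main estimate
  have main : ∀ δ ∈ Set.Ioc (0 : ℝ) δ₀, ∀ x : X, ‖y - x‖ ≤ δ →
      ‖S y ζ - S x (ζ - R (ι (T (x - y))))‖ ≤ (q₀ + C₀ * ε + C₁ * δ) * ‖y - x‖ := by
    intro δ hδ x hyx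
    obtain ⟨hδpos, hδle⟩ := hδ
    set u : X := x - y with hu
    set w : E := R (ι (T u)) with hw
    set ξ : E := ζ - w with hξ
    have hun : ‖u‖ = ‖y - x‖ := by rw [hu, norm_sub_rev]
    have huδ : ‖u‖ ≤ δ := hun ▸ hyx
    have hwle : ‖w‖ ≤ ‖R.comp (ι.comp T)‖ * ‖u‖ := by
      simpa using (R.comp (ι.comp T)).le_opNorm u
    have hpdiff : ((x, ξ) : X × E) - (y, ζ) = (u, -w) := by
      simp [Prod.ext_iff, hu, hξ]
    have hpnorm : ‖((x, ξ) : X × E) - (y, ζ)‖ ≤ K * ‖u‖ := by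
      rw [hpdiff, Prod.norm_def]
      refine max_le ?_ ?_
      · exact le_mul_of_one_le_left (norm_nonneg u) hK1
      · rw [norm_neg]
        refine le_trans hwle (mul_le_mul_of_nonneg_right ?_ (norm_nonneg u))
        exact le_add_of_nonneg_left one_pos.le
    have hKδ1 : K * δ ≤ 1 := by
      have := mul_le_mul_of_nonneg_left hδle hKpos.le
      rwa [hδ₀, mul_one_div, div_self hKpos.ne'] at this
    have hKu : K * ‖u‖ ≤ K * δ := mul_le_mul_of_nonneg_left huδ hKpos.le
    -- membership
    have hmem : ((x, ξ) : X × E) ∈ Metric.closedBall ((y, ζ) : X × E) (K * δ) := by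
      rw [Metric.mem_closedBall, dist_eq_norm]
      exact le_trans hpnorm hKu
    have hsub : Metric.closedBall ((y, ζ) : X × E) (K * δ)
        ⊆ Metric.closedBall ((y, ζ) : X × E) 1 :=
      Metric.closedBall_subset_closedBall hKδ1
    -- MVT for g = F - D
    set g : X × E → X := fun p => F p - D p with hg
    have hgd : ∀ q : X × E, DifferentiableAt ℝ g q := fun q =>
      (hFd q).sub (D.differentiable q)
    have hgderiv : ∀ q : X × E, fderiv ℝ g q = fderiv ℝ F q - D := by
      intro q
      rw [hg]
      rw [fderiv_fun_sub (hFd q) (D.differentiable q)]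
      simp
    have hgbound : ∀ q ∈ Metric.closedBall ((y, ζ) : X × E) (K * δ),
        ‖fderiv ℝ g q‖ ≤ M * (K * δ) := by
      intro q hq
      rw [hgderiv q]
      refine le_trans (lip q (hsub hq)) (mul_le_mul_of_nonneg_left ?_ hM0)
      rw [Metric.mem_closedBall, dist_eq_norm] at hq
      exact hq
    have hgMVT : ‖g (y, ζ) - g (x, ξ)‖ ≤ M * (K * δ) * ‖((y, ζ) : X × E) - (x, ξ)‖ :=
      (convex_closedBall _ _).norm_image_sub_le_of_norm_fderiv_le
        (fun q _ => hgd q) hgbound hmem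
        (Metric.mem_closedBall_self (by positivity))
    have hgest : ‖g (y, ζ) - g (x, ξ)‖ ≤ C₁ * δ * ‖u‖ := by
      refine le_trans hgMVT ?_
      have : ‖((y, ζ) : X × E) - (x, ξ)‖ ≤ K * ‖u‖ := by
        rw [norm_sub_rev]; exact hpnorm
      calc M * (K * δ) * ‖((y, ζ) : X × E) - (x, ξ)‖
          ≤ M * (K * δ) * (K * ‖u‖) :=
            mul_le_mul_of_nonneg_left this (by positivity)
        _ = C₁ * δ * ‖u‖ := by rw [hC₁]; ring
    -- decomposition
    have hdecomp : S y ζ - S x ξ = (g (y, ζ) - g (x, ξ)) + D ((y, ζ) - (x, ξ)) := by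
      have : D ((y, ζ) - (x, ξ)) = D (y, ζ) - D (x, ξ) := map_sub D _ _
      rw [this, hg]
      show F (y, ζ) - F (x, ξ) = _
      change F (y, ζ) - F (x, ξ) = (F (y, ζ) - D (y, ζ) - (F (x, ξ) - D (x, ξ))) + (D (y, ζ) - D (x, ξ))
      abel
    have hDarg : ((y, ζ) : X × E) - (x, ξ) = (-u, w) := by
      simp [Prod.ext_iff, hu, hξ]
    rw [hdecomp, hDarg]
    calc ‖g (y, ζ) - g (x, ξ) + D (-u, w)‖
        ≤ ‖g (y, ζ) - g (x, ξ)‖ + ‖D (-u, w)‖ := norm_add_le _ _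
      _ ≤ C₁ * δ * ‖u‖ + (q₀ + C₀ * ε) * ‖u‖ := add_le_add hgest (hlin u)
      _ = (q₀ + C₀ * ε + C₁ * δ) * ‖u‖ := by ring
      _ = (q₀ + C₀ * ε + C₁ * δ) * ‖y - x‖ := by rw [hun]
  refine ⟨⟨C₁, hC₁0, δ₀, hδ₀pos, main⟩, ?_⟩
  intro q₁ hq₁l hq₁u
  set δ : ℝ := min δ₀ ((q₁ - (q₀ + C₀ * ε)) / (C₁ + 1)) with hδdef
  have hgap : 0 < q₁ - (q₀ + C₀ * ε) := sub_pos.mpr hq₁l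
  have hδpos : 0 < δ := lt_min hδ₀pos (by positivity)
  refine ⟨δ, hδpos, fun x hx => ?_⟩
  have h1 := main δ ⟨hδpos, min_le_left _ _⟩ x hx
  refine le_trans h1 (mul_le_mul_of_nonneg_right ?_ (norm_nonneg _))
  have hδ2 : δ ≤ (q₁ - (q₀ + C₀ * ε)) / (C₁ + 1) := min_le_right _ _
  have : C₁ * δ ≤ q₁ - (q₀ + C₀ * ε) := by
    calc C₁ * δ ≤ C₁ * ((q₁ - (q₀ + C₀ * ε)) / (C₁ + 1)) :=
          mul_le_mul_of_nonneg_left hδ2 hC₁0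
      _ ≤ (C₁ + 1) * ((q₁ - (q₀ + C₀ * ε)) / (C₁ + 1)) := by
          apply mul_le_mul_of_nonneg_right (by linarith) (by positivity)
      _ = q₁ - (q₀ + C₀ * ε) := by field_simp
  linarith
end
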